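/- Let G₁ and G₂ be connected strongly regular graphs with the same parameters (n, d, λ, μ). Then for every i ∈ V₁ and j ∈ V₂, the 𝔰¹-labels 𝔰¹_{G₁}(i) and 𝔰¹_{G₂}(j) are equal (as multisets of node labels at every level), and hence 𝔰¹_{G₁} = 𝔰¹_{G₂}. In particular, 𝔰¹ cannot distinguish non-isomorphic strongly regular graphs with equal parameters. -/

import Mathlib

/-- Hereditarily structured labels of refinement depth `l`. -/
def LblT : ℕ → Type
  | 0 => ℕ
  | l + 1 => LblT l × Multiset (LblT l)

variable {V : Type} [Fintype V] [DecidableEq V]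

/-- The perfect-aggregation (`𝔰`) label of node `i` at refinement level `l`, starting
from the base coloring `c`:  level `0` is the base color, and level `l+1` pairs the
previous label with the multiset of previous labels of the neighbors. -/
def sLabel (G : SimpleGraph V) [DecidableRel G.Adj] (c : V → ℕ) :
    (l : ℕ) → V → LblT l
  | 0, i => c i
  | l + 1, i =>
      ((sLabel G c l i, (G.neighborFinset i).val.map (sLabel G c l)) :
        LblT l × Multiset (LblT l))

/-- The base coloring `i ↦ Σ_q q·δ_{i,i_q}` determined by the list of distinguished
nodes `pref = [i₁, …, i_q]` (1-indexed, as in the paper). -/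
def baseColor (pref : List V) (i : V) : ℕ :=
  ((List.range pref.length).map fun q => if pref[q]? = some i then q + 1 else 0).sum

/-- The row of node `i` in the label matrix: its labels at all levels. -/
def sRow (G : SimpleGraph V) [DecidableRel G.Adj] (c : V → ℕ) (i : V) :
    (l : ℕ) → LblT l :=
  fun l => sLabel G c l i

/-- Type of `r`-fold aggregated labels: at depth `0`, a label matrix regarded as the
multiset of its rows; each aggregation step forms a multiset. -/
def AggT : ℕ → Type
  | 0 => Multiset ((l : ℕ) → LblT l)
  | r + 1 => Multiset (AggT r)

/-- The aggregated label `𝔰ᵏ_G(i₁,…,i_q)` where `pref = [i₁,…,i_q]` and `r` further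
distinguished nodes remain to be chosen (`r = k - q`). -/
def sAgg (G : SimpleGraph V) [DecidableRel G.Adj] : (r : ℕ) → List V → AggT r
  | 0, pref => Finset.univ.val.map (fun i => sRow G (baseColor pref) i)
  | r + 1, pref =>
      ((Finset.univ.filter (fun i => i ∉ pref)).val.map
        (fun i => sAgg G r (pref ++ [i])))

/-- The `𝔰ᵏ` fingerprint of the graph `G`. -/
def sFingerprint (G : SimpleGraph V) [DecidableRel G.Adj] (k : ℕ) : AggT k :=
  sAgg G k []

/-!
Distinguish a node `i` and sort every node `j` into one of three classes: `i` itself, the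
neighbours of `i`, and the rest. In a strongly regular graph the classes of the neighbours of
`j`, counted with multiplicity, depend only on the class of `j` and on `(d, λ, μ)`. By
induction on the level, the `𝔰`-label of `j` under the colouring that marks `i` is therefore a
function of its class alone, the same function in every graph with these parameters, and the
label matrix is that function applied to the class multiset `{0, 1ᵈ, 2ⁿ⁻¹⁻ᵈ}`.
-/

namespace Multiset

theorem eq_replicate_count_of_forall_le_two {s : Multiset ℕ} (hs : ∀ x ∈ s, x ≤ 2) :
    s = replicate (s.count 0) 0 + replicate (s.count 1) 1 +
      replicate (card s - s.count 0 - s.count 1) 2 := by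
  have hrep : s = replicate (s.count 0) 0 + replicate (s.count 1) 1 +
      replicate (s.count 2) 2 := by
    ext x
    simp only [count_add, count_replicate]
    rcases (by omega : x = 0 ∨ x = 1 ∨ x = 2 ∨ 3 ≤ x) with rfl | rfl | rfl | hx
    · simp
    · simp
    · simp
    · have hx' : x ∉ s := fun hmem => by have := hs x hmem; omega
      rw [count_eq_zero.2 hx']
      split_ifs <;> omega
  have hcard := congrArg card hrep
  simp only [card_add, card_replicate] at hcard
  convert hrep using 3
  omega

end Multiset

theorem baseColor_singleton {α : Type} [DecidableEq α] (i j : α) :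
    baseColor [i] j = if j = i then 1 else 0 := by
  simp [baseColor, eq_comm]

open Finset

namespace SimpleGraph

/-- In a connected strongly regular graph with `μ > 0` this is the distance from `i` to `j`. -/
def relClass {α : Type} [DecidableEq α] (G : SimpleGraph α) [DecidableRel G.Adj] (i j : α) :
    ℕ :=
  if j = i then 0 else if G.Adj i j then 1 else 2

section relClass

variable {α : Type} [DecidableEq α] (G : SimpleGraph α) [DecidableRel G.Adj] {i j : α}

theorem relClass_le_two : G.relClass i j ≤ 2 := by
  unfold relClass; split_ifs <;> omega

theorem relClass_eq_zero_iff : G.relClass i j = 0 ↔ j = i := by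
  unfold relClass; split_ifs <;> simp_all

theorem relClass_eq_one_iff : G.relClass i j = 1 ↔ G.Adj i j := by
  unfold relClass
  split_ifs with hji
  · subst hji; simp
  · simp_all
  · simp_all

theorem map_relClass_val (s : Finset α) (i : α) :
    s.val.map (G.relClass i) =
      Multiset.replicate (if i ∈ s then 1 else 0) 0 +
        Multiset.replicate #{k ∈ s | G.Adj i k} 1 +
        Multiset.replicate (#s - (if i ∈ s then 1 else 0) - #{k ∈ s | G.Adj i k}) 2 := by
  have hcount0 : (s.val.map (G.relClass i)).count 0 = if i ∈ s then 1 else 0 := by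
    rw [Multiset.count_map, Multiset.filter_congr fun k _ => eq_comm.trans
      (G.relClass_eq_zero_iff), Multiset.filter_eq', Multiset.card_replicate,
      Multiset.count_eq_of_nodup s.nodup]
    rfl
  have hcount1 : (s.val.map (G.relClass i)).count 1 = #{k ∈ s | G.Adj i k} := by
    rw [Multiset.count_map, Multiset.filter_congr fun k _ => eq_comm.trans
      (G.relClass_eq_one_iff)]
    rfl
  rw [Multiset.eq_replicate_count_of_forall_le_two (s := s.val.map (G.relClass i))
    (by simp [G.relClass_le_two]), hcount0, hcount1, Multiset.card_map, Finset.card_val]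

end relClass

end SimpleGraph

/-- The classes of the neighbours of a node of class `c` in a strongly regular graph with
parameters `(_, d, λ, μ)`. -/
def srgNeighborClasses (d lam mu : ℕ) : ℕ → Multiset ℕ
  | 0 => Multiset.replicate d 1
  | 1 => {0} + Multiset.replicate lam 1 + Multiset.replicate (d - 1 - lam) 2
  | _ => Multiset.replicate mu 1 + Multiset.replicate (d - mu) 2

def srgLabel (d lam mu : ℕ) : (l : ℕ) → ℕ → LblT l
  | 0, c => ((if c = 0 then 1 else 0 : ℕ) : LblT 0)
  | l + 1, c =>
      ((srgLabel d lam mu l c, (srgNeighborClasses d lam mu c).map (srgLabel d lam mu l)) :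
        LblT l × Multiset (LblT l))

def srgLabelMatrix (n d lam mu : ℕ) : AggT 0 :=
  ({0} + Multiset.replicate d 1 + Multiset.replicate (n - 1 - d) 2).map
    fun c l => srgLabel d lam mu l c

namespace SimpleGraph.IsSRGWith

variable {G : SimpleGraph V} [DecidableRel G.Adj] {n d lam mu : ℕ}

theorem card_filter_adj_neighborFinset (h : G.IsSRGWith n d lam mu) (i j : V) :
    #{k ∈ G.neighborFinset j | G.Adj i k} =
      if j = i then d else if G.Adj i j then lam else mu := by
  have hcommon :
      #{k ∈ G.neighborFinset j | G.Adj i k} = Fintype.card (G.commonNeighbors i j) := by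
    rw [← Set.toFinset_card]
    congr 1
    ext k
    rw [Set.mem_toFinset]
    simp [commonNeighbors, and_comm]
  split_ifs with hji hij
  · subst hji
    rw [filter_true_of_mem fun k hk => (G.mem_neighborFinset j k).1 hk,
      card_neighborFinset_eq_degree, h.regular.degree_eq]
  · rw [hcommon, h.of_adj i j hij]
  · rw [hcommon, h.of_not_adj (Ne.symm hji) hij]

theorem map_relClass_neighborFinset (h : G.IsSRGWith n d lam mu) (i j : V) :
    (G.neighborFinset j).val.map (G.relClass i) =
      srgNeighborClasses d lam mu (G.relClass i j) := by
  rw [map_relClass_val, h.card_filter_adj_neighborFinset, card_neighborFinset_eq_degree,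
    h.regular.degree_eq]
  unfold relClass
  split_ifs <;> simp_all [srgNeighborClasses, adj_comm]

theorem map_relClass_univ (h : G.IsSRGWith n d lam mu) (i : V) :
    (univ : Finset V).val.map (G.relClass i) =
      {0} + Multiset.replicate d 1 + Multiset.replicate (n - 1 - d) 2 := by
  rw [map_relClass_val, ← neighborFinset_eq_filter, card_neighborFinset_eq_degree,
    h.regular.degree_eq, card_univ, h.card]
  simp

theorem sLabel_baseColor_singleton (h : G.IsSRGWith n d lam mu) (i : V) (l : ℕ) (j : V) :
    sLabel G (baseColor [i]) l j = srgLabel d lam mu l (G.relClass i j) := by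
  induction l generalizing j with
  | zero =>
    simp only [sLabel, baseColor_singleton, srgLabel, relClass_eq_zero_iff]
    rfl
  | succ l ih =>
    rw [sLabel, srgLabel, ih, ← h.map_relClass_neighborFinset, Multiset.map_map]
    congr 2
    exact funext ih

theorem sAgg_zero_singleton (h : G.IsSRGWith n d lam mu) (i : V) :
    sAgg G 0 [i] = srgLabelMatrix n d lam mu := by
  rw [srgLabelMatrix, ← h.map_relClass_univ i, Multiset.map_map]
  show univ.val.map (fun j => sRow G (baseColor [i]) j) = _
  congr 1
  funext j l
  exact h.sLabel_baseColor_singleton i l j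

theorem sFingerprint_one (h : G.IsSRGWith n d lam mu) :
    sFingerprint G 1 = Multiset.replicate n (srgLabelMatrix n d lam mu) := by
  show (univ.filter fun i => i ∉ ([] : List V)).val.map (fun i => sAgg G 0 ([] ++ [i])) = _
  simp only [List.not_mem_nil, not_false_eq_true, filter_true, List.nil_append,
    h.sAgg_zero_singleton, Multiset.map_const', card_val, card_univ, h.card]

end SimpleGraph.IsSRGWith

theorem srg_s1_labels_eq_general {V₁ V₂ : Type} [Fintype V₁] [DecidableEq V₁]
    [Fintype V₂] [DecidableEq V₂] (G₁ : SimpleGraph V₁) (G₂ : SimpleGraph V₂)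
    [DecidableRel G₁.Adj] [DecidableRel G₂.Adj] (n d lam mu : ℕ)
    (h₁ : G₁.IsSRGWith n d lam mu) (h₂ : G₂.IsSRGWith n d lam mu) :
    (∀ (i : V₁) (j : V₂), sAgg G₁ 0 [i] = sAgg G₂ 0 [j]) ∧
      sFingerprint G₁ 1 = sFingerprint G₂ 1 :=
  ⟨fun i j => (h₁.sAgg_zero_singleton i).trans (h₂.sAgg_zero_singleton j).symm,
    h₁.sFingerprint_one.trans h₂.sFingerprint_one.symm⟩

/-- Connected strongly regular graphs with the same parameters `(n,d,λ,μ)` get identical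
`𝔰¹`-labels at every node, hence identical `𝔰¹` fingerprints. -/
theorem srg_s1_labels_eq {V₁ V₂ : Type} [Fintype V₁] [DecidableEq V₁]
    [Fintype V₂] [DecidableEq V₂] (G₁ : SimpleGraph V₁) (G₂ : SimpleGraph V₂)
    [DecidableRel G₁.Adj] [DecidableRel G₂.Adj] (n d lam mu : ℕ)
    (h₁ : G₁.IsSRGWith n d lam mu) (h₂ : G₂.IsSRGWith n d lam mu)
    (hc₁ : G₁.Connected) (hc₂ : G₂.Connected) :
    (∀ (i : V₁) (j : V₂), sAgg G₁ 0 [i] = sAgg G₂ 0 [j]) ∧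
      sFingerprint G₁ 1 = sFingerprint G₂ 1 :=
  srg_s1_labels_eq_general G₁ G₂ n d lam mu h₁ h₂
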